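/- Consider the string rewrite rule ba →_R ab over the alphabet {a,b}, and let L̂ = { v ∈ {a,b}* | ∃ u ∈ L((ab)*) : u →_R* v }. Then L̂ ∩ L(a* b*) = { a^n b^n | n ≥ 0 }; consequently L̂ is not regular, even though for each fixed string u the set { v | u →_R* v } is finite and L((ab)*) is regular. -/

import Mathlib

/-- The alphabet `{a, b}`. -/
inductive AB : Type
  | a : AB
  | b : AB
deriving DecidableEq

instance instFintypeAB : Fintype AB :=
  ⟨{AB.a, AB.b}, fun x => by cases x <;> simp⟩

/-- The string rewrite relation `→_R` given by the single rule `ba → ab`. -/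
def StepR (u v : List AB) : Prop :=
  ∃ x z : List AB, u = x ++ [AB.b, AB.a] ++ z ∧ v = x ++ [AB.a, AB.b] ++ z

/-- The language of the regular expression `(ab)*`. -/
def Labstar : Language AB :=
  {w | ∃ k : ℕ, w = (List.replicate k [AB.a, AB.b]).flatten}

/-! Every rewrite step only swaps two adjacent letters, so every word of `L̂` has as many `a`s as
`b`s, while `(ab)ⁿ` sorts to `aⁿbⁿ` by moving each `b` rightwards past the `a`s. Hence `bⁿ` lies
in the left quotient of `L̂` by `aⁿ` but not in that by `aᵐ` for `m ≠ n`: infinitely many left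
quotients, so `L̂` is not regular by Myhill–Nerode. The descendants of `u` are permutations of `u`, hence
finitely many, and `(ab)*` is regular since its left quotients are `(ab)*`, `b(ab)*` and `∅`. -/

open Relation List

namespace Language

variable {α : Type*}

theorem IsRegular.of_leftQuotient_closed {L : Language α} (S : Set (Language α)) (hS : S.Finite)
    (hL : L ∈ S) (hquot : ∀ M ∈ S, ∀ c, M.leftQuotient [c] ∈ S) : L.IsRegular := by
  refine IsRegular.of_finite_range_leftQuotient (hS.subset ?_)
  rintro _ ⟨w, rfl⟩
  induction w generalizing L with
  | nil => exact hL
  | cons c w ih => exact (leftQuotient_append L [c] w).symm ▸ ih (hquot L hL c)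

theorem not_isRegular_of_count_eq [DecidableEq α] {L : Language α} {a b : α} (hab : a ≠ b)
    (hcount : ∀ w ∈ L, w.count a = w.count b)
    (hmem : ∀ n, replicate n a ++ replicate n b ∈ L) : ¬ L.IsRegular := by
  intro hL
  have hinj : Function.Injective fun n => L.leftQuotient (replicate n a) := by
    intro m n hmn
    have hq : L.leftQuotient (replicate m a) = L.leftQuotient (replicate n a) := hmn
    have : replicate n b ∈ L.leftQuotient (replicate m a) := hq ▸ hmem n
    simpa [count_replicate, hab, hab.symm] using hcount _ this
  exact Set.infinite_range_of_injective hinj <|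
    hL.finite_range_leftQuotient.subset (Set.range_subset_iff.2 fun n => ⟨_, rfl⟩)

end Language

theorem StepR.perm {u v : List AB} (h : StepR u v) : u.Perm v := by
  obtain ⟨x, z, rfl, rfl⟩ := h
  exact ((Perm.swap _ _ _).append_left x).append_right z

theorem perm_of_reflTransGen_stepR {u v : List AB} (h : ReflTransGen StepR u v) : u.Perm v :=
  reflTransGen_le_of_equivalence_of_le (Perm.eqv AB) (fun _ _ => StepR.perm) _ _ h

theorem finite_setOf_reflTransGen_stepR (u : List AB) :
    {v | ReflTransGen StepR u v}.Finite :=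
  (finite_length_eq AB u.length).subset fun _ hv => (perm_of_reflTransGen_stepR hv).length_eq.symm

theorem reflTransGen_stepR_append {u v : List AB} (x z : List AB)
    (h : ReflTransGen StepR u v) : ReflTransGen StepR (x ++ u ++ z) (x ++ v ++ z) :=
  ReflTransGen.lift (fun w => x ++ w ++ z)
    (fun _ _ ⟨p, q, hu, hv⟩ => ⟨x ++ p, q ++ z, by simp [hu], by simp [hv]⟩) _ _ h

theorem reflTransGen_stepR_b_replicate_a (n : ℕ) :
    ReflTransGen StepR (AB.b :: replicate n AB.a) (replicate n AB.a ++ [AB.b]) := by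
  induction n with
  | zero => exact .refl
  | succ n ih =>
    have hswap : StepR (AB.b :: replicate (n + 1) AB.a) (AB.a :: AB.b :: replicate n AB.a) :=
      ⟨[], replicate n AB.a, rfl, rfl⟩
    exact .head hswap (by simpa [replicate_succ] using reflTransGen_stepR_append [AB.a] [] ih)

theorem reflTransGen_stepR_abstar (n : ℕ) :
    ReflTransGen StepR (replicate n [AB.a, AB.b]).flatten
      (replicate n AB.a ++ replicate n AB.b) := by
  induction n with
  | zero => exact .refl
  | succ n ih =>
    calc (replicate (n + 1) [AB.a, AB.b]).flatten
        = [AB.a, AB.b] ++ (replicate n [AB.a, AB.b]).flatten ++ [] := by simp [replicate_succ]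
      ReflTransGen StepR _ ([AB.a, AB.b] ++ (replicate n AB.a ++ replicate n AB.b) ++ []) :=
        reflTransGen_stepR_append _ _ ih
      _ = [AB.a] ++ AB.b :: replicate n AB.a ++ replicate n AB.b := by simp
      ReflTransGen StepR _ ([AB.a] ++ (replicate n AB.a ++ [AB.b]) ++ replicate n AB.b) :=
        reflTransGen_stepR_append _ _ (reflTransGen_stepR_b_replicate_a n)
      _ = replicate (n + 1) AB.a ++ replicate (n + 1) AB.b := by simp [replicate_succ]

theorem count_flatten_replicate_ab (c : AB) (k : ℕ) :
    ((replicate k [AB.a, AB.b]).flatten).count c = k := by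
  cases c <;> simp [count_flatten]

theorem cons_b_notMem_Labstar (w : List AB) : AB.b :: w ∉ Labstar := by
  rintro ⟨_ | k, hk⟩ <;> simp [replicate_succ] at hk

theorem cons_a_cons_a_notMem_Labstar (w : List AB) : AB.a :: AB.a :: w ∉ Labstar := by
  rintro ⟨_ | k, hk⟩ <;> simp [replicate_succ] at hk

theorem cons_a_cons_b_mem_Labstar_iff (w : List AB) :
    AB.a :: AB.b :: w ∈ Labstar ↔ w ∈ Labstar := by
  constructor
  · rintro ⟨_ | k, hk⟩
    · simp at hk
    · exact ⟨k, by simpa [replicate_succ] using hk⟩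
  · rintro ⟨k, rfl⟩
    exact ⟨k + 1, by simp [replicate_succ]⟩

theorem Labstar_isRegular : Labstar.IsRegular := by
  refine Language.IsRegular.of_leftQuotient_closed {Labstar, Labstar.leftQuotient [AB.a], 0}
    (by simp) (by simp) ?_
  have hempty {M : Language AB} (h : ∀ w, w ∉ M) : M = 0 :=
    Language.ext fun w => iff_of_false (h w) (Language.notMem_zero w)
  rintro M (rfl | rfl | rfl) (_ | _)
  · exact .inr (.inl rfl)
  · exact .inr (.inr (hempty cons_b_notMem_Labstar))
  · exact .inr (.inr (hempty cons_a_cons_a_notMem_Labstar))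
  · exact .inl (Language.ext cons_a_cons_b_mem_Labstar_iff)
  all_goals exact .inr (.inr rfl)

def Lhat : Language AB := {v | ∃ u ∈ Labstar, ReflTransGen StepR u v}

theorem count_a_eq_count_b_of_mem_Lhat {v : List AB} (hv : v ∈ Lhat) :
    v.count AB.a = v.count AB.b := by
  obtain ⟨u, ⟨k, rfl⟩, hu⟩ := hv
  simp only [← (perm_of_reflTransGen_stepR hu).count_eq, count_flatten_replicate_ab]

theorem replicate_mem_Lhat (n : ℕ) : replicate n AB.a ++ replicate n AB.b ∈ Lhat :=
  ⟨_, ⟨n, rfl⟩, reflTransGen_stepR_abstar n⟩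

/-- For `L̂ = { v | ∃ u ∈ L((ab)*), u →_R* v }` one has
`L̂ ∩ L(a* b*) = { a^n b^n | n ≥ 0 }`; consequently `L̂` is not regular, even
though for each fixed `u` the set `{ v | u →_R* v }` is finite and `L((ab)*)`
is regular. -/
theorem bubble_sort_closure_not_regular :
    ({v : List AB | ∃ u ∈ Labstar, Relation.ReflTransGen StepR u v} ∩
        {w : List AB | ∃ m n : ℕ,
          w = List.replicate m AB.a ++ List.replicate n AB.b} =
      {w : List AB | ∃ n : ℕ,
          w = List.replicate n AB.a ++ List.replicate n AB.b}) ∧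
    ¬ Language.IsRegular
        {v : List AB | ∃ u ∈ Labstar, Relation.ReflTransGen StepR u v} ∧
    (∀ u : List AB, Set.Finite {v : List AB | Relation.ReflTransGen StepR u v}) ∧
    Language.IsRegular Labstar := by
  refine ⟨?_, Language.not_isRegular_of_count_eq (L := Lhat) (by decide)
    (fun _ => count_a_eq_count_b_of_mem_Lhat) replicate_mem_Lhat,
    finite_setOf_reflTransGen_stepR, Labstar_isRegular⟩
  ext w
  constructor
  · rintro ⟨hw, m, n, rfl⟩
    have hmn : m = n := by simpa [count_replicate] using count_a_eq_count_b_of_mem_Lhat hw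
    exact ⟨n, hmn ▸ rfl⟩
  · rintro ⟨n, rfl⟩
    exact ⟨replicate_mem_Lhat n, n, n, rfl⟩
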